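/- arXiv:2004.01292 — 2 statements merged into one kernel-verified Lean document; each statement's English description precedes it below -/
import Mathlib

section
/- Let $\zeta_\phi(x) = K_\phi(\sqrt{x})/x^{\phi/2}$ for $x > 0$. Then for every natural number $k$, the $k$-th derivative satisfies $\zeta_\phi^{(k)}(x) = (-\tfrac{1}{2})^k\, K_{\phi+k}(\sqrt{x})/x^{(\phi+k)/2}$ for all $x > 0$. -/
open MeasureTheory Real Set

noncomputable def besselK (l t : ℝ) : ℝ :=
  (1/2) * ∫ u in Set.Ioi (0:ℝ), u ^ (l - 1) * Real.exp (-(t/2) * (u + u⁻¹))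

noncomputable def gig (a b l : ℝ) (x : ℝ) : ℝ :=
  (a/b) ^ (l/2) / (2 * besselK l (Real.sqrt (a*b))) * x ^ (l - 1) *
    Real.exp (-(a*x + b/x)/2)

/-!
Substituting `u = √x w` in the integral defining `K_φ(√x)` gives
`ζ_φ(x) = ½ ∫₀^∞ w^(φ-1) exp(-(x w + w⁻¹)/2) dw`, in which `x` enters only through the factor
`exp(-x w / 2)`. Differentiating under the integral sign therefore multiplies the integrand by
`-w/2`, i.e. `ζ_φ' = -½ ζ_{φ+1}`, and the formula follows by induction on `k`.
-/

open Filter Topology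

theorem exp_neg_le_div_rpow_self {t a : ℝ} (ht : 0 < t) (ha : 0 ≤ a) :
    exp (-t) ≤ (a / t) ^ a := by
  rcases ha.eq_or_lt with rfl | ha
  · simpa using ht.le
  have hpow : (t / a) ^ a ≤ exp t := calc
    (t / a) ^ a ≤ exp (t / a) ^ a :=
      rpow_le_rpow (by positivity) (by linarith [add_one_le_exp (t / a)]) ha.le
    _ = exp t := by rw [← exp_mul, div_mul_cancel₀ _ ha.ne']
  rw [exp_neg, ← inv_div, inv_rpow (by positivity)]
  exact inv_anti₀ (by positivity) hpow

theorem iteratedDeriv_eq_pow_mul_of_hasDerivAt {f : ℝ → ℝ → ℝ} {c : ℝ} {s : Set ℝ}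
    (hs : IsOpen s) (hf : ∀ l, ∀ x ∈ s, HasDerivAt (f l) (c * f (l + 1) x) x) (l : ℝ) (k : ℕ) :
    ∀ x ∈ s, iteratedDeriv k (f l) x = c ^ k * f (l + k) x := by
  induction k with
  | zero => simp
  | succ k ih =>
    intro x hx
    have hnear : iteratedDeriv k (f l) =ᶠ[𝓝 x] fun y => c ^ k * f (l + k) y :=
      eventually_of_mem (hs.mem_nhds hx) ih
    rw [iteratedDeriv_succ, hnear.deriv_eq, ((hf (l + k) x hx).const_mul (c ^ k)).deriv]
    push_cast
    ring_nf

noncomputable def zetaIntegrand (l x w : ℝ) : ℝ :=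
  w ^ (l - 1) * exp (-(x * w + w⁻¹) / 2)

noncomputable def zetaIntegral (l x : ℝ) : ℝ :=
  (1 / 2) * ∫ w in Ioi 0, zetaIntegrand l x w

theorem zetaIntegrand_nonneg (l x : ℝ) {w : ℝ} (hw : 0 ≤ w) : 0 ≤ zetaIntegrand l x w := by
  unfold zetaIntegrand
  positivity

theorem integrableOn_zetaIntegrand (l : ℝ) {x : ℝ} (hx : 0 < x) :
    IntegrableOn (zetaIntegrand l x) (Ioi 0) := by
  -- `exp (-1 / (2w)) ≤ (2aw)^a` with `a = |l - 1|` tames the singularity of `w^(l-1)` at `0`.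
  set a := |l - 1|
  have hdom : IntegrableOn (fun w => (2 * a) ^ a * (w ^ (l - 1 + a) * exp (-(x / 2) * w)))
      (Ioi 0) := by
    have := (integrableOn_rpow_mul_exp_neg_mul_rpow (p := 1) (s := l - 1 + a)
      (by linarith [neg_abs_le (l - 1)]) one_pos (half_pos hx)).const_mul ((2 * a) ^ a)
    simp only [rpow_one] at this
    exact this
  refine hdom.mono' ?_ ((ae_restrict_iff' measurableSet_Ioi).2 (Eventually.of_forall ?_))
  · refine ContinuousOn.aestronglyMeasurable (fun w (hw : 0 < w) => ?_) measurableSet_Ioi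
    have : ContinuousAt (zetaIntegrand l x) w := by
      unfold zetaIntegrand
      fun_prop (disch := simp [hw.ne'])
    exact this.continuousWithinAt
  · intro w (hw : 0 < w)
    have hexp : exp (-(w⁻¹ / 2)) ≤ (2 * a) ^ a * w ^ a := by
      have := exp_neg_le_div_rpow_self (by positivity : 0 < w⁻¹ / 2) (abs_nonneg (l - 1) : 0 ≤ a)
      rwa [show a / (w⁻¹ / 2) = 2 * a * w by field_simp,
        mul_rpow (by positivity) hw.le] at this
    rw [norm_of_nonneg (zetaIntegrand_nonneg l x hw.le)]
    calc zetaIntegrand l x w = w ^ (l - 1) * exp (-(w⁻¹ / 2)) * exp (-(x / 2) * w) := by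
          rw [zetaIntegrand, mul_assoc, ← exp_add]; ring_nf
      _ ≤ w ^ (l - 1) * ((2 * a) ^ a * w ^ a) * exp (-(x / 2) * w) := by gcongr
      _ = (2 * a) ^ a * (w ^ (l - 1 + a) * exp (-(x / 2) * w)) := by
          rw [rpow_add hw]; ring

theorem besselK_sqrt_eq_rpow_mul_zetaIntegral (l : ℝ) {x : ℝ} (hx : 0 < x) :
    besselK l √x = x ^ (l / 2) * zetaIntegral l x := by
  have hr : 0 < √x := sqrt_pos.2 hx
  have hsubst : ∀ w ∈ Ioi (0 : ℝ),
      (√x * w) ^ (l - 1) * exp (-(√x / 2) * (√x * w + (√x * w)⁻¹))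
        = √x ^ (l - 1) * zetaIntegrand l x w := by
    intro w (hw : 0 < w)
    rw [mul_rpow hr.le hw.le, zetaIntegrand, mul_assoc]
    congr 3
    field_simp
    rw [sq_sqrt hx.le]
    ring
  have hpow : √x * √x ^ (l - 1) = x ^ (l / 2) := by
    rw [sqrt_eq_rpow, ← rpow_mul hx.le, ← rpow_add hx]
    ring_nf
  calc besselK l √x
      = 1 / 2 * (√x * ∫ w in Ioi 0,
          (√x * w) ^ (l - 1) * exp (-(√x / 2) * (√x * w + (√x * w)⁻¹))) := by
        rw [besselK, integral_comp_mul_left_Ioi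
          (fun u => u ^ (l - 1) * exp (-(√x / 2) * (u + u⁻¹))) 0 hr,
          mul_zero, smul_eq_mul, mul_inv_cancel_left₀ hr.ne']
    _ = x ^ (l / 2) * zetaIntegral l x := by
        rw [setIntegral_congr_fun measurableSet_Ioi hsubst, integral_const_mul, zetaIntegral,
          ← hpow]
        ring

theorem hasDerivAt_zetaIntegrand (l w y : ℝ) (hw : w ≠ 0) :
    HasDerivAt (fun y => zetaIntegrand l y w) (-(1 / 2) * zetaIntegrand (l + 1) y w) y := by
  have hlin : HasDerivAt (fun y => -(y * w + w⁻¹) / 2) (-w / 2) y := by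
    simpa using (((hasDerivAt_id y).mul_const w).add_const w⁻¹).neg.div_const 2
  refine (hlin.exp.const_mul (w ^ (l - 1))).congr_deriv ?_
  rw [zetaIntegrand, add_sub_cancel_right, rpow_sub_one hw]
  field_simp

theorem zetaIntegrand_antitone (l : ℝ) {w : ℝ} (hw : 0 ≤ w) :
    Antitone (fun y => zetaIntegrand l y w) := by
  intro y y' hy
  simp only [zetaIntegrand]
  gcongr

theorem hasDerivAt_zetaIntegral (l : ℝ) {x : ℝ} (hx : 0 < x) :
    HasDerivAt (zetaIntegral l) (-(1 / 2) * zetaIntegral (l + 1) x) x := by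
  have hball : Metric.ball x (x / 2) ⊆ Ioi (x / 2) := fun y hy => by
    rw [Metric.mem_ball, dist_eq, abs_lt] at hy
    exact mem_Ioi.2 (by linarith)
  -- The integrand decreases in `y`, so on this ball its value at `x / 2` dominates it.
  have hderiv := hasDerivAt_integral_of_dominated_loc_of_deriv_le
    (μ := volume.restrict (Ioi 0)) (F := fun y w => zetaIntegrand l y w)
    (F' := fun y w => -(1 / 2) * zetaIntegrand (l + 1) y w)
    (bound := fun w => 1 / 2 * zetaIntegrand (l + 1) (x / 2) w)
    (Metric.ball_mem_nhds x (half_pos hx))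
    ((lt_mem_nhds hx).mono fun y hy => (integrableOn_zetaIntegrand l hy).aestronglyMeasurable)
    (integrableOn_zetaIntegrand l hx)
    ((integrableOn_zetaIntegrand (l + 1) hx).const_mul _).aestronglyMeasurable
    ((ae_restrict_iff' measurableSet_Ioi).2 (Eventually.of_forall fun w (hw : 0 < w) y hy => by
      rw [norm_mul, norm_neg, norm_of_nonneg one_half_pos.le,
        norm_of_nonneg (zetaIntegrand_nonneg _ _ hw.le)]
      exact mul_le_mul_of_nonneg_left (zetaIntegrand_antitone (l + 1) hw.le (hball hy).le)
        one_half_pos.le))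
    ((integrableOn_zetaIntegrand (l + 1) (half_pos hx)).const_mul _)
    ((ae_restrict_iff' measurableSet_Ioi).2 (Eventually.of_forall fun w (hw : 0 < w) y _ =>
      hasDerivAt_zetaIntegrand l w y hw.ne'))
  refine (hderiv.2.const_mul (1 / 2)).congr_deriv ?_
  rw [integral_const_mul, zetaIntegral]
  ring

theorem iteratedDeriv_zetaIntegral (l : ℝ) (k : ℕ) {x : ℝ} (hx : 0 < x) :
    iteratedDeriv k (zetaIntegral l) x = (-(1 / 2)) ^ k * zetaIntegral (l + k) x :=
  iteratedDeriv_eq_pow_mul_of_hasDerivAt isOpen_Ioi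
    (fun l _ hx => hasDerivAt_zetaIntegral l hx) l k x hx

theorem zeta_iteratedDeriv (phi : ℝ) (k : ℕ) (x : ℝ) (hx : 0 < x) :
    iteratedDeriv k (fun x : ℝ => besselK phi (Real.sqrt x) / x ^ (phi/2)) x
      = (-(1/2) : ℝ) ^ k * besselK (phi + k) (Real.sqrt x) / x ^ ((phi + k)/2) := by
  have hzeta : (fun x : ℝ => besselK phi (Real.sqrt x) / x ^ (phi/2)) =ᶠ[𝓝 x] zetaIntegral phi :=
    eventually_of_mem (isOpen_Ioi.mem_nhds hx) fun y (hy : 0 < y) => by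
      show besselK phi √y / y ^ (phi / 2) = _
      rw [besselK_sqrt_eq_rpow_mul_zetaIntegral phi hy]
      field_simp
  rw [hzeta.iteratedDeriv_eq, iteratedDeriv_zetaIntegral phi k hx,
    besselK_sqrt_eq_rpow_mul_zetaIntegral (phi + k) hx]
  field_simp
end

section
/- For $k \in \mathbb{N}$, the $k$-th derivative of the function $x \mapsto K_\phi(\sqrt{x})/x^{\phi/2}$ at a point $x > 0$ can be expressed as $\chi^{(k)}(x) := (-1)^k \frac{\partial^k}{\partial x^k}\frac{K_\phi(\sqrt{x})}{x^{\phi/2}} = \frac{1}{2^k}\, \frac{K_{\phi+k}(\sqrt{x})}{x^{(\phi+k)/2}}$, which is strictly positive; hence $x \mapsto K_\phi(\sqrt{x})/x^{\phi/2}$ is completely monotone on $(0,\infty)$. -/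
open MeasureTheory Real Set

/-!
Substituting `u = √x · w` in the integral defining `K_φ` gives
`K_φ(√x) / x^(φ/2) = ½ ∫₀^∞ w^(φ-1) exp(-(x w + 1/w)/2) dw`, in which `x` enters linearly in the
exponent. Differentiating under the integral sign multiplies the integrand by `-w/2`, so the
derivative of the `φ`-function is `-½` times the `(φ+1)`-function. Iterating gives the formula,
and positivity of the integrand gives the sign.
-/

lemma integrableOn_rpow_mul_exp_neg_mul_inv {s b : ℝ} (hs : s < -1) (hb : 0 < b) :
    IntegrableOn (fun x : ℝ => x ^ s * exp (-b * x⁻¹)) (Ioi 0) := by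
  rw [← integrableOn_Ioi_comp_rpow_iff' _ (by norm_num : (-1 : ℝ) ≠ 0)]
  refine (integrableOn_rpow_mul_exp_neg_mul_rpow (s := -s - 2) (by linarith) one_pos hb).congr_fun
    (fun x (hx : 0 < x) => ?_) measurableSet_Ioi
  simp only [smul_eq_mul, rpow_neg_one, inv_inv, rpow_one, inv_rpow hx.le, ← rpow_neg hx.le]
  rw [← mul_assoc, ← rpow_add hx]
  ring_nf

lemma rpow_le_rpow_add_rpow_neg {x p q : ℝ} (hx : 0 < x) (hpq : |p| ≤ q) :
    x ^ p ≤ x ^ q + x ^ (-q) := by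
  rcases le_total 1 x with h1 | h1
  · have := rpow_le_rpow_of_exponent_le h1 ((le_abs_self p).trans hpq)
    linarith [rpow_pos_of_pos hx (-q)]
  · have := rpow_le_rpow_of_exponent_ge hx h1 (neg_le_of_abs_le hpq)
    linarith [rpow_pos_of_pos hx q]

lemma integrableOn_rpow_mul_exp_neg_add_inv {p a c : ℝ} (ha : 0 < a) (hc : 0 < c) :
    IntegrableOn (fun w : ℝ => w ^ p * exp (-(a * w + c * w⁻¹) / 2)) (Ioi 0) := by
  set q := |p| + 2
  have hq : |p| ≤ q := by linarith
  refine Integrable.mono' ((integrableOn_rpow_mul_exp_neg_mul_rpow (s := q) (p := 1)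
    (by linarith [abs_nonneg p]) one_pos (half_pos ha)).add
    (integrableOn_rpow_mul_exp_neg_mul_inv (s := -q) (by linarith [abs_nonneg p])
      (half_pos hc))) (by fun_prop) ?_
  rw [ae_restrict_iff' measurableSet_Ioi]
  refine ae_of_all _ fun w (hw : 0 < w) => ?_
  rw [norm_of_nonneg (by positivity)]
  simp only [Pi.add_apply, rpow_one]
  calc w ^ p * exp (-(a * w + c * w⁻¹) / 2)
      ≤ (w ^ q + w ^ (-q)) * exp (-(a * w + c * w⁻¹) / 2) := by
        gcongr; exact rpow_le_rpow_add_rpow_neg hw hq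
    _ ≤ w ^ q * exp (-(a / 2) * w) + w ^ (-q) * exp (-(c / 2) * w⁻¹) := by
        rw [add_mul]
        gcongr <;> nlinarith [mul_pos hc (inv_pos.2 hw), mul_pos ha hw]

noncomputable def besselKRatio (m x : ℝ) : ℝ :=
  (1 / 2) * ∫ w in Ioi 0, w ^ (m - 1) * exp (-(x * w + w⁻¹) / 2)

lemma integrableOn_besselKRatio_integrand (m : ℝ) {x : ℝ} (hx : 0 < x) :
    IntegrableOn (fun w : ℝ => w ^ m * exp (-(x * w + w⁻¹) / 2)) (Ioi 0) := by
  simpa using integrableOn_rpow_mul_exp_neg_add_inv (p := m) hx one_pos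

lemma besselKRatio_eq (m : ℝ) {x : ℝ} (hx : 0 < x) :
    besselKRatio m x = besselK m (√x) / x ^ (m / 2) := by
  have hxm : x ^ (m / 2) = √x ^ m := by
    rw [sqrt_eq_rpow, ← rpow_mul hx.le]; ring_nf
  set s := √x
  have hs : 0 < s := sqrt_pos.2 hx
  have hsq : s * s = x := mul_self_sqrt hx.le
  have hsub := integral_comp_mul_left_Ioi
    (fun u => u ^ (m - 1) * exp (-(s / 2) * (u + u⁻¹))) 0 hs
  have hintegrand : ∀ w ∈ Ioi (0 : ℝ), (s * w) ^ (m - 1) * exp (-(s / 2) * (s * w + (s * w)⁻¹))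
      = s ^ (m - 1) * (w ^ (m - 1) * exp (-(x * w + w⁻¹) / 2)) := by
    intro w (hw : 0 < w)
    rw [mul_rpow hs.le hw.le, ← hsq]
    field_simp
  rw [mul_zero, setIntegral_congr_fun measurableSet_Ioi hintegrand, integral_const_mul,
    smul_eq_mul] at hsub
  have hsm : s ^ m = s ^ (m - 1) * s := by rw [← rpow_add_one hs.ne']; ring_nf
  rw [besselKRatio, besselK, hxm, hsm, eq_div_iff (by positivity)]
  linear_combination (s / 2) * hsub
    + (∫ u in Ioi 0, u ^ (m - 1) * exp (-(s / 2) * (u + u⁻¹))) / 2 * mul_inv_cancel₀ hs.ne'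

lemma besselKRatio_pos (m : ℝ) {x : ℝ} (hx : 0 < x) : 0 < besselKRatio m x := by
  have hpos : ∀ w ∈ Ioi (0 : ℝ), 0 < w ^ (m - 1) * exp (-(x * w + w⁻¹) / 2) :=
    fun w (hw : 0 < w) => by positivity
  refine mul_pos one_half_pos ((setIntegral_pos_iff_support_of_nonneg_ae
    ((ae_restrict_iff' measurableSet_Ioi).2 (ae_of_all _ fun w hw => (hpos w hw).le))
    (integrableOn_besselKRatio_integrand _ hx)).2 ?_)
  have hsupp : Ioi 0 ⊆ Function.support fun w : ℝ => w ^ (m - 1) * exp (-(x * w + w⁻¹) / 2) :=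
    fun w hw => (hpos w hw).ne'
  rw [inter_eq_right.2 hsupp, Real.volume_Ioi]
  exact ENNReal.zero_lt_top

lemma hasDerivAt_besselKRatio (m : ℝ) {x : ℝ} (hx : 0 < x) :
    HasDerivAt (besselKRatio m) (-(1 / 2) * besselKRatio (m + 1) x) x := by
  set F : ℝ → ℝ → ℝ := fun y w => w ^ (m - 1) * exp (-(y * w + w⁻¹) / 2)
  set F' : ℝ → ℝ → ℝ := fun y w => -(1 / 2) * (w ^ m * exp (-(y * w + w⁻¹) / 2))
  have hF_deriv : ∀ w ∈ Ioi (0 : ℝ), ∀ y, HasDerivAt (F · w) (F' y w) y := by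
    intro w (hw : 0 < w) y
    have h := (((hasDerivAt_mul_const (x := y) w).add_const w⁻¹).neg.div_const 2).exp.const_mul
      (w ^ (m - 1))
    refine h.congr_deriv ?_
    simp only [F', Pi.neg_apply, rpow_sub_one hw.ne']
    field_simp
  have hF'_bound : ∀ w ∈ Ioi (0 : ℝ), ∀ y ∈ Ioi (x / 2),
      ‖F' y w‖ ≤ (1 / 2) * (w ^ m * exp (-(x / 2 * w + w⁻¹) / 2)) := by
    intro w (hw : 0 < w) y (hy : x / 2 < y)
    rw [norm_mul, norm_neg, norm_of_nonneg (by positivity), norm_of_nonneg (by positivity)]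
    gcongr
  have h := hasDerivAt_integral_of_dominated_loc_of_deriv_le (μ := volume.restrict (Ioi 0))
    (F := F) (F' := F') (Ioi_mem_nhds (half_lt_self hx))
    (Filter.Eventually.of_forall fun y => by fun_prop)
    (integrableOn_besselKRatio_integrand (m - 1) hx) (by fun_prop)
    ((ae_restrict_iff' measurableSet_Ioi).2 (ae_of_all _ hF'_bound))
    ((integrableOn_besselKRatio_integrand m (half_pos hx)).const_mul _)
    ((ae_restrict_iff' measurableSet_Ioi).2 (ae_of_all _ fun w hw y _ => hF_deriv w hw y))
  refine (h.2.const_mul (1 / 2 : ℝ)).congr_deriv ?_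
  simp only [F', integral_const_mul, besselKRatio, add_sub_cancel_right]
  ring

lemma iteratedDeriv_besselKRatio (m : ℝ) (k : ℕ) :
    EqOn (iteratedDeriv k (besselKRatio m)) (fun x => (-(1 / 2)) ^ k * besselKRatio (m + k) x)
      (Ioi 0) := by
  induction k with
  | zero => intro x _; simp
  | succ k ih =>
    intro x (hx : 0 < x)
    rw [iteratedDeriv_succ, (ih.eventuallyEq_of_mem (Ioi_mem_nhds hx)).deriv_eq,
      ((hasDerivAt_besselKRatio _ hx).const_mul _).deriv]
    push_cast
    ring_nf

theorem zeta_completely_monotone (phi : ℝ) :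
    (∀ (k : ℕ) (x : ℝ), 0 < x →
      (-1 : ℝ) ^ k *
        iteratedDeriv k (fun x : ℝ => besselK phi (Real.sqrt x) / x ^ (phi/2)) x
        = (1 / 2 ^ k) * besselK (phi + k) (Real.sqrt x) / x ^ ((phi + k)/2)) ∧
    (∀ (k : ℕ) (x : ℝ), 0 < x →
      0 < (-1 : ℝ) ^ k *
        iteratedDeriv k (fun x : ℝ => besselK phi (Real.sqrt x) / x ^ (phi/2)) x) := by
  have hratio : EqOn (fun x : ℝ => besselK phi (√x) / x ^ (phi / 2)) (besselKRatio phi) (Ioi 0) :=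
    fun x hx => (besselKRatio_eq phi hx).symm
  have hderiv : ∀ (k : ℕ) (x : ℝ), 0 < x →
      (-1 : ℝ) ^ k * iteratedDeriv k (fun x : ℝ => besselK phi (√x) / x ^ (phi / 2)) x
        = besselKRatio (phi + k) x / 2 ^ k := by
    intro k x hx
    rw [hratio.iteratedDeriv_of_isOpen isOpen_Ioi k hx, iteratedDeriv_besselKRatio phi k hx,
      ← mul_assoc, ← mul_pow, show (-1 : ℝ) * -(1 / 2) = 2⁻¹ by norm_num, inv_pow,
      inv_mul_eq_div]
  refine ⟨fun k x hx => ?_, fun k x hx => ?_⟩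
  · rw [hderiv k x hx, besselKRatio_eq _ hx]
    ring
  · rw [hderiv k x hx]
    exact div_pos (besselKRatio_pos _ hx) (by positivity)
end
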